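/- arXiv:1611.01456 — 2 statements merged into one kernel-verified Lean document; each statement's English description precedes it below -/
import Mathlib

section
/- Let L be a real symmetric N×N matrix with spectral decomposition L = χΛχᵀ where χ is orthogonal and Λ diagonal. Let A be any real N×N matrix. Then the gradient of the map L ↦ tr(A e^L) is given by ∇_L tr(A e^L) = χ((χᵀAᵀχ) ∘ B)χᵀ, where ∘ denotes the Hadamard (entrywise) product and B is the N×N matrix with entries B_ij = e^{Λ_ii} if Λ_ii = Λ_jj and B_ij = (e^{Λ_ii} − e^{Λ_jj})/(Λ_ii − Λ_jj) otherwise. -/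
/-!
Differentiating the exponential series termwise, the derivative of `exp` at `L` is
`Δ ↦ ∑ₙ (1/n!) ∑_{k<n} L^(n-1-k) Δ L^k`. Conjugation by `χ` commutes with this operator, and at
`Λ = diagonal d` its `(i, j)` entry is `Δᵢⱼ ∑ₙ (1/n!) ∑_{k<n} dᵢ^(n-1-k) dⱼ^k = Δᵢⱼ Bᵢⱼ`, by the
geometric sum formula and the series of `exp` and of its derivative. The gradient is then read off
from cyclicity of the trace and `tr (X (Y ⊙ B)) = tr ((Xᵀ ⊙ B)ᵀ Y)`.
-/

open Matrix

attribute [local instance] Matrix.linftyOpNormedRing Matrix.linftyOpNormedAlgebra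

open Finset
open scoped Nat RightActions

lemma Real.hasSum_exp_div_factorial (x : ℝ) : HasSum (fun n : ℕ => x ^ n / n !) (Real.exp x) := by
  rw [Real.exp_eq_exp_ℝ]
  exact NormedSpace.expSeries_div_hasSum_exp x

lemma Real.hasSum_mul_pow_pred_div_factorial (x : ℝ) :
    HasSum (fun n : ℕ => n * x ^ (n - 1) / n !) (Real.exp x) := by
  have hshift : HasSum (fun n : ℕ => ((n + 1 : ℕ) : ℝ) * x ^ (n + 1 - 1) / (n + 1)!)
      (Real.exp x) := by
    refine (Real.hasSum_exp_div_factorial x).congr_fun fun n => ?_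
    simp [Nat.factorial_succ, mul_div_mul_left _ _ (by positivity : (n : ℝ) + 1 ≠ 0)]
  simpa using (hasSum_nat_add_iff (f := fun n : ℕ => n * x ^ (n - 1) / n !) 1).mp hshift

lemma Real.hasSum_exp_divided_difference (x y : ℝ) :
    HasSum (fun n : ℕ => (n ! : ℝ)⁻¹ * ∑ k ∈ range n, x ^ (n - 1 - k) * y ^ k)
      (if x = y then Real.exp x else (Real.exp x - Real.exp y) / (x - y)) := by
  split_ifs with hxy
  · subst hxy
    refine (Real.hasSum_mul_pow_pred_div_factorial x).congr_fun fun n => ?_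
    have hpow : ∀ k ∈ range n, x ^ (n - 1 - k) * x ^ k = x ^ (n - 1) := fun k hk => by
      rw [← pow_add, Nat.sub_add_cancel (by grind)]
    simp [sum_congr rfl hpow, div_eq_inv_mul]
  · refine (((Real.hasSum_exp_div_factorial x).sub (Real.hasSum_exp_div_factorial y)).div_const
      (x - y)).congr_fun fun n => ?_
    have hgeom : (x - y) * ∑ k ∈ range n, x ^ (n - 1 - k) * y ^ k = x ^ n - y ^ n := by
      have := geom_sum₂_mul y x n
      simp only [mul_comm (y ^ _)] at this
      linarith
    field_simp [sub_ne_zero.mpr hxy]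
    rw [← hgeom]
    ring

section BanachAlgebra

variable {𝕂 𝔸 : Type*} [RCLike 𝕂] [NormedRing 𝔸] [NormedAlgebra 𝕂 𝔸]

lemma norm_pow_mul_le (x y : 𝔸) (k : ℕ) : ‖x ^ k * y‖ ≤ ‖x‖ ^ k * ‖y‖ := by
  induction k with
  | zero => simp
  | succ k ih =>
    rw [pow_succ', mul_assoc, pow_succ', mul_assoc]
    exact (norm_mul_le _ _).trans (mul_le_mul_of_nonneg_left ih (norm_nonneg x))

lemma norm_mul_pow_le (x y : 𝔸) (k : ℕ) : ‖y * x ^ k‖ ≤ ‖y‖ * ‖x‖ ^ k := by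
  induction k with
  | zero => simp
  | succ k ih =>
    rw [pow_succ, ← mul_assoc, pow_succ, ← mul_assoc]
    exact (norm_mul_le _ _).trans (mul_le_mul_of_nonneg_right ih (norm_nonneg x))

variable (𝕂) in
/-- The derivative of `y ↦ y ^ n` at `x`, in the shape produced by `hasFDerivAt_pow'`. -/
noncomputable def powFDeriv (x : 𝔸) (n : ℕ) : 𝔸 →L[𝕂] 𝔸 :=
  ∑ i ∈ range n, x ^ (n.pred - i) •> ContinuousLinearMap.id 𝕂 𝔸 <• x ^ i

lemma powFDeriv_apply (x Δ : 𝔸) (n : ℕ) :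
    powFDeriv 𝕂 x n Δ = ∑ i ∈ range n, x ^ (n - 1 - i) * Δ * x ^ i := by
  simp [powFDeriv, mul_assoc]

lemma powFDeriv_units_conj (u : 𝔸ˣ) (x Δ : 𝔸) (n : ℕ) :
    powFDeriv 𝕂 (u * x * ↑u⁻¹) n Δ = u * powFDeriv 𝕂 x n (↑u⁻¹ * Δ * u) * ↑u⁻¹ := by
  simp only [powFDeriv_apply, Units.conj_pow, mul_sum, sum_mul]
  simp only [mul_assoc]

lemma norm_powFDeriv_le {x : 𝔸} {R : ℝ} (hx : ‖x‖ ≤ R) (n : ℕ) :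
    ‖powFDeriv 𝕂 x n‖ ≤ n * R ^ (n - 1) := by
  have hR : 0 ≤ R := (norm_nonneg x).trans hx
  refine ContinuousLinearMap.opNorm_le_bound _ (by positivity) fun Δ => ?_
  have hterm : ∀ i ∈ range n, ‖x ^ (n - 1 - i) * Δ * x ^ i‖ ≤ R ^ (n - 1) * ‖Δ‖ := by
    intro i hi
    calc ‖x ^ (n - 1 - i) * Δ * x ^ i‖ ≤ ‖x‖ ^ (n - 1 - i) * ‖Δ‖ * ‖x‖ ^ i :=
          (norm_mul_pow_le _ _ _).trans
            (mul_le_mul_of_nonneg_right (norm_pow_mul_le _ _ _) (by positivity))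
      _ ≤ R ^ (n - 1 - i) * ‖Δ‖ * R ^ i := by gcongr
      _ = R ^ (n - 1) * ‖Δ‖ := by
          rw [mul_right_comm, ← pow_add, Nat.sub_add_cancel (by grind)]
  calc ‖powFDeriv 𝕂 x n Δ‖ ≤ ∑ i ∈ range n, R ^ (n - 1) * ‖Δ‖ := by
        rw [powFDeriv_apply]
        exact norm_sum_le_of_le _ hterm
    _ = n * R ^ (n - 1) * ‖Δ‖ := by simp [mul_assoc]

lemma norm_inv_factorial_smul_powFDeriv_le {x : 𝔸} {R : ℝ} (hx : ‖x‖ ≤ R) (n : ℕ) :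
    ‖(n !⁻¹ : 𝕂) • powFDeriv 𝕂 x n‖ ≤ n * R ^ (n - 1) / n ! := by
  rw [norm_smul, norm_inv, RCLike.norm_natCast, inv_mul_eq_div]
  gcongr
  exact norm_powFDeriv_le hx n

variable [CompleteSpace 𝔸]

variable (𝕂) in
noncomputable def expFDeriv (x : 𝔸) : 𝔸 →L[𝕂] 𝔸 := ∑' n : ℕ, (n !⁻¹ : 𝕂) • powFDeriv 𝕂 x n

lemma hasSum_expFDeriv (x : 𝔸) :
    HasSum (fun n : ℕ => (n !⁻¹ : 𝕂) • powFDeriv 𝕂 x n) (expFDeriv 𝕂 x) :=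
  (Summable.of_norm_bounded (Real.hasSum_mul_pow_pred_div_factorial ‖x‖).summable
    (norm_inv_factorial_smul_powFDeriv_le le_rfl)).hasSum

lemma hasSum_expFDeriv_apply (x Δ : 𝔸) :
    HasSum (fun n : ℕ => (n !⁻¹ : 𝕂) • powFDeriv 𝕂 x n Δ) (expFDeriv 𝕂 x Δ) :=
  (hasSum_expFDeriv x).mapL (ContinuousLinearMap.apply 𝕂 𝔸 Δ)

/-- On the ball of radius `R` the `n`-th differentiated term is bounded by `n R^(n-1) / n!`, so the
exponential series can be differentiated termwise. -/
theorem hasFDerivAt_exp_expFDeriv (x : 𝔸) : HasFDerivAt NormedSpace.exp (expFDeriv 𝕂 x) x := by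
  have hx : x ∈ Metric.ball (0 : 𝔸) (‖x‖ + 1) := by simp
  have hball : IsPreconnected (Metric.ball (0 : 𝔸) (‖x‖ + 1)) := by
    let := NormedSpace.restrictScalars ℝ 𝕂 𝔸
    exact (convex_ball _ _).isPreconnected
  have h := hasFDerivAt_tsum_of_isPreconnected (𝕜 := 𝕂)
    (f := fun n (y : 𝔸) => (n !⁻¹ : 𝕂) • y ^ n) (f' := fun n y => (n !⁻¹ : 𝕂) • powFDeriv 𝕂 y n)
    (Real.hasSum_mul_pow_pred_div_factorial (‖x‖ + 1)).summable Metric.isOpen_ball hball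
    (fun n y _ => (hasFDerivAt_pow' n).fun_const_smul _)
    (fun n y hy => norm_inv_factorial_smul_powFDeriv_le (mem_ball_zero_iff.mp hy).le n) hx
    (NormedSpace.expSeries_summable' x) hx
  rwa [← NormedSpace.exp_eq_tsum 𝕂] at h

lemma expFDeriv_units_conj (u : 𝔸ˣ) (x Δ : 𝔸) :
    expFDeriv 𝕂 (u * x * ↑u⁻¹) Δ = u * expFDeriv 𝕂 x (↑u⁻¹ * Δ * u) * ↑u⁻¹ := by
  refine (hasSum_expFDeriv_apply _ Δ).unique ?_
  refine ((hasSum_expFDeriv_apply x _).mapL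
    (ContinuousLinearMap.mulLeftRight 𝕂 𝔸 u ↑u⁻¹)).congr_fun fun n => ?_
  simp [powFDeriv_units_conj]

end BanachAlgebra

section Trace

variable {m n R : Type*} [Fintype m] [Fintype n] [CommSemiring R]

lemma Matrix.trace_mul_hadamard (X : Matrix m n R) (Y B : Matrix n m R) :
    (X * (Y ⊙ B)).trace = ((Xᵀ ⊙ B)ᵀ * Y).trace := by
  simp only [trace, diag, mul_apply, hadamard_apply, transpose_apply]
  exact sum_congr rfl fun i _ => sum_congr rfl fun j _ => by ring

lemma Matrix.trace_mul_conj_hadamard (A Δ : Matrix n n R) (χ : Matrix n m R) (B : Matrix m m R) :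
    (A * (χ * ((χᵀ * Δ * χ) ⊙ B) * χᵀ)).trace = ((χ * ((χᵀ * Aᵀ * χ) ⊙ B) * χᵀ)ᵀ * Δ).trace := by
  calc (A * (χ * ((χᵀ * Δ * χ) ⊙ B) * χᵀ)).trace
      = (χᵀ * A * χ * ((χᵀ * Δ * χ) ⊙ B)).trace := by
        rw [← Matrix.mul_assoc, trace_mul_comm, ← Matrix.mul_assoc, ← Matrix.mul_assoc]
    _ = (((χᵀ * A * χ)ᵀ ⊙ B)ᵀ * (χᵀ * Δ * χ)).trace := trace_mul_hadamard _ _ _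
    _ = ((χ * ((χᵀ * Aᵀ * χ) ⊙ B) * χᵀ)ᵀ * Δ).trace := by
        simp only [transpose_mul, transpose_transpose, Matrix.mul_assoc]
        rw [trace_mul_comm χ]
        simp only [Matrix.mul_assoc]

end Trace

section Diagonal

variable {n : Type*} [Fintype n] [DecidableEq n]

lemma Matrix.powFDeriv_diagonal_apply (d : n → ℝ) (Δ : Matrix n n ℝ) (k : ℕ) (i j : n) :
    powFDeriv ℝ (diagonal d) k Δ i j = Δ i j * ∑ m ∈ range k, d i ^ (k - 1 - m) * d j ^ m := by
  simp only [powFDeriv_apply, sum_apply, diagonal_pow, diagonal_mul, mul_diagonal, mul_sum,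
    Pi.pow_apply]
  exact sum_congr rfl fun m _ => by ring

/-- The Daleckii–Krein formula for the exponential at a diagonal matrix. -/
lemma Matrix.expFDeriv_diagonal (d : n → ℝ) (Δ B : Matrix n n ℝ) (hB : ∀ i j, B i j =
      if d i = d j then Real.exp (d i) else (Real.exp (d i) - Real.exp (d j)) / (d i - d j)) :
    expFDeriv ℝ (diagonal d) Δ = Δ ⊙ B := by
  ext i j
  refine (Pi.hasSum.mp (Pi.hasSum.mp (hasSum_expFDeriv_apply (diagonal d) Δ) i) j).unique ?_
  simpa [powFDeriv_diagonal_apply, hB, mul_left_comm] using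
    (Real.hasSum_exp_divided_difference (d i) (d j)).mul_left (Δ i j)

end Diagonal

theorem gradient_trace_exp_general
    (N : ℕ) (A L χ : Matrix (Fin N) (Fin N) ℝ) (d : Fin N → ℝ)
    (hχ : χ * χᵀ = 1) (hχ' : χᵀ * χ = 1)
    (hdecomp : L = χ * Matrix.diagonal d * χᵀ)
    (B : Matrix (Fin N) (Fin N) ℝ)
    (hB : ∀ i j, B i j =
      if d i = d j then Real.exp (d i)
      else (Real.exp (d i) - Real.exp (d j)) / (d i - d j)) :
    DifferentiableAt ℝ (fun M : Matrix (Fin N) (Fin N) ℝ =>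
        (A * NormedSpace.exp M).trace) L ∧
    ∀ Δ : Matrix (Fin N) (Fin N) ℝ,
      fderiv ℝ (fun M : Matrix (Fin N) (Fin N) ℝ =>
        (A * NormedSpace.exp M).trace) L Δ =
      ((χ * ((χᵀ * Aᵀ * χ) ⊙ B) * χᵀ)ᵀ * Δ).trace := by
  let χUnit : (Matrix (Fin N) (Fin N) ℝ)ˣ := ⟨χ, χᵀ, hχ, hχ'⟩
  let traceMulLeft : Matrix (Fin N) (Fin N) ℝ →L[ℝ] ℝ :=
    (traceLinearMap (Fin N) ℝ ℝ ∘ₗ LinearMap.mulLeft ℝ A).toContinuousLinearMap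
  have hderiv : HasFDerivAt (fun M : Matrix (Fin N) (Fin N) ℝ => (A * NormedSpace.exp M).trace)
      (traceMulLeft.comp (expFDeriv ℝ L)) L :=
    traceMulLeft.hasFDerivAt.comp L (hasFDerivAt_exp_expFDeriv L)
  refine ⟨hderiv.differentiableAt, fun Δ => (DFunLike.congr_fun hderiv.fderiv Δ).trans ?_⟩
  have hL : L = χUnit.val * diagonal d * χUnit⁻¹.val := hdecomp
  change (A * expFDeriv ℝ L Δ).trace = _
  rw [hL, expFDeriv_units_conj, expFDeriv_diagonal d _ B hB]
  exact trace_mul_conj_hadamard A Δ χ B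

/-- gradient of `L ↦ tr(A e^L)` at a symmetric `L = χ Λ χᵀ`
(`χ` orthogonal, `Λ = diagonal d`) is `χ ((χᵀAᵀχ) ∘ B) χᵀ`, where the gradient `G`
is characterized by `fderiv f L Δ = ⟨G, Δ⟩ = tr(Gᵀ Δ)` (Frobenius inner product). -/
theorem gradient_trace_exp
    (N : ℕ) (A L χ : Matrix (Fin N) (Fin N) ℝ) (d : Fin N → ℝ)
    (hLsymm : L.IsSymm)
    (hχ : χ * χᵀ = 1) (hχ' : χᵀ * χ = 1)
    (hdecomp : L = χ * Matrix.diagonal d * χᵀ)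
    (B : Matrix (Fin N) (Fin N) ℝ)
    (hB : ∀ i j, B i j =
      if d i = d j then Real.exp (d i)
      else (Real.exp (d i) - Real.exp (d j)) / (d i - d j)) :
    DifferentiableAt ℝ (fun M : Matrix (Fin N) (Fin N) ℝ =>
        (A * NormedSpace.exp M).trace) L ∧
    ∀ Δ : Matrix (Fin N) (Fin N) ℝ,
      fderiv ℝ (fun M : Matrix (Fin N) (Fin N) ℝ =>
        (A * NormedSpace.exp M).trace) L Δ =
      ((χ * ((χᵀ * Aᵀ * χ) ⊙ B) * χᵀ)ᵀ * Δ).trace :=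
  gradient_trace_exp_general N A L χ d hχ hχ' hdecomp B hB
end

section
/- For a diagonal real N×N matrix Λ, the Fréchet derivative of the matrix exponential at Λ applied to a direction Δ equals B ∘ Δ, where B_ij = e^{Λ_ii} if Λ_ii = Λ_jj and B_ij = (e^{Λ_ii} − e^{Λ_jj})/(Λ_ii − Λ_jj) otherwise. -/
open Matrix

attribute [local instance] Matrix.linftyOpNormedRing Matrix.linftyOpNormedAlgebra

/-!
The exponential is analytic, so it has a derivative `L` at `Λ = diagonal d`. Since `X` commutes
with `exp X`, differentiating `X * exp X = exp X * X` at `Λ` gives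
`(dᵢ - dⱼ) L(Δ)ᵢⱼ = (e^{dᵢ} - e^{dⱼ}) Δᵢⱼ`, which settles every entry with `dᵢ ≠ dⱼ`.
A matrix unit `Eₖₗ` with `dₖ = dₗ` commutes with `Λ`, so `exp (Λ + t Eₖₗ) = e^Λ exp (t Eₖₗ)` and
`L(Eₖₗ) = e^Λ Eₖₗ`. If `dₖ ≠ dₗ`, conjugation by the diagonal `S` with `Sₘₘ = 2` where `dₘ = dₖ`
and `1` elsewhere fixes `Λ` and doubles `Eₖₗ`, hence doubles `L(Eₖₗ)`; but it leaves the entries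
with `dᵢ = dⱼ` unchanged, so these vanish.
-/

open NormedSpace

section BanachAlgebra

variable {𝕂 𝔸 : Type*} [RCLike 𝕂] [NormedRing 𝔸] [NormedAlgebra 𝕂 𝔸] [CompleteSpace 𝔸]

theorem hasFDerivAt_exp_fderiv (x : 𝔸) : HasFDerivAt exp (fderiv 𝕂 exp x) x :=
  (exp_analytic x).differentiableAt.hasFDerivAt

theorem fderiv_exp_commutator (x y : 𝔸) :
    x * fderiv 𝕂 exp x y - fderiv 𝕂 exp x y * x = exp x * y - y * exp x := by
  have hL := hasFDerivAt_exp_fderiv (𝕂 := 𝕂) x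
  have hcomm : (id * exp : 𝔸 → 𝔸) = exp * id :=
    funext fun z => ((Commute.refl z).exp_right).eq
  have h := ((hasFDerivAt_id x).mul' hL).unique (hcomm ▸ hL.mul' (hasFDerivAt_id x))
  have hy := congrArg (· y) h
  simp only [id_eq, _root_.add_apply, _root_.smul_apply, smul_eq_mul, ContinuousLinearMap.id_apply,
    MulOpposite.smul_eq_mul_unop, MulOpposite.unop_op] at hy
  exact sub_eq_sub_iff_add_eq_add.mpr hy

theorem fderiv_exp_units_conj (x y : 𝔸) (u : 𝔸ˣ) (hu : Commute (u : 𝔸) x) :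
    fderiv 𝕂 exp x (u * y * ↑u⁻¹) = u * fderiv 𝕂 exp x y * ↑u⁻¹ := by
  -- `exp_units_conj` (like `exp_add_of_commute` below) is stated for normed `ℚ`-algebras.
  let _ := NormedAlgebra.restrictScalars ℚ 𝕂 𝔸
  let c := ContinuousLinearMap.mulLeftRight 𝕂 𝔸 u ↑u⁻¹
  have hc : ∀ z, c z = u * z * ↑u⁻¹ := fun z => rfl
  have hcx : c x = x := by rw [hc, hu.eq, mul_assoc, Units.mul_inv, mul_one]
  have hL := hasFDerivAt_exp_fderiv (𝕂 := 𝕂) x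
  have hLc : HasFDerivAt exp (fderiv 𝕂 exp x) (c x) := hcx.symm ▸ hL
  have hfun : exp ∘ c = c ∘ exp := funext fun z => exp_units_conj u z
  have h := (hfun ▸ hLc.comp x c.hasFDerivAt).unique (c.hasFDerivAt.comp x hL)
  exact congrArg (· y) h

theorem fderiv_exp_of_commute {x y : 𝔸} (h : Commute x y) :
    fderiv 𝕂 exp x y = exp x * y := by
  let _ := NormedAlgebra.restrictScalars ℚ 𝕂 𝔸
  have hline : HasDerivAt (fun t : 𝕂 => x + t • y) y 0 := by
    simpa using ((hasDerivAt_id (0 : 𝕂)).smul_const y).const_add x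
  have hL : HasFDerivAt exp (fderiv 𝕂 exp x) (x + (0 : 𝕂) • y) := by
    simpa using hasFDerivAt_exp_fderiv x
  have hsplit : HasDerivAt (fun t : 𝕂 => exp (x + t • y)) (exp x * y) 0 := by
    have := (hasDerivAt_exp_smul_const (𝕂 := 𝕂) y 0).const_mul (exp x)
    rw [zero_smul, exp_zero, one_mul] at this
    convert this using 2 with t
    exact exp_add_of_commute (h.smul_right t)
  exact (hL.comp_hasDerivAt 0 hline).unique hsplit

end BanachAlgebra

noncomputable def expDividedDifference (a b : ℝ) : ℝ :=
  if a = b then Real.exp a else (Real.exp a - Real.exp b) / (a - b)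

section DiagonalMatrix

variable {n : Type*} [Fintype n] [DecidableEq n] (d : n → ℝ)

theorem exp_diagonal_real : exp (diagonal d) = diagonal fun i => Real.exp (d i) := by
  rw [exp_diagonal]
  congr 1
  ext i
  simp [Real.exp_eq_exp_ℝ]

theorem fderiv_exp_diagonal_apply_of_ne (Δ : Matrix n n ℝ) {i j : n} (hij : d i ≠ d j) :
    fderiv ℝ exp (diagonal d) Δ i j = expDividedDifference (d i) (d j) * Δ i j := by
  -- Restating the general lemma puts its products on the plain `Matrix` instances rather than
  -- those of the `linfty` normed ring, so that `exp_diagonal_real` and `diagonal_mul` apply.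
  have h : diagonal d * fderiv ℝ exp (diagonal d) Δ - fderiv ℝ exp (diagonal d) Δ * diagonal d
      = exp (diagonal d) * Δ - Δ * exp (diagonal d) := fderiv_exp_commutator _ _
  replace h := congrFun₂ h i j
  rw [exp_diagonal_real] at h
  simp only [Matrix.sub_apply, diagonal_mul, mul_diagonal] at h
  rw [expDividedDifference, if_neg hij, div_mul_eq_mul_div, eq_div_iff (sub_ne_zero.mpr hij)]
  linear_combination h

theorem fderiv_exp_diagonal_single_apply_eq_zero {k l i j : n} (hkl : d k ≠ d l)
    (hij : d i = d j) : fderiv ℝ exp (diagonal d) (single k l 1) i j = 0 := by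
  set s : n → ℝ := fun m => if d m = d k then 2 else 1
  have hs : ∀ m, s m ≠ 0 := fun m => by simp only [s]; split_ifs <;> norm_num
  let S : (Matrix n n ℝ)ˣ := ⟨diagonal s, diagonal s⁻¹, by simp [hs], by simp [hs]⟩
  have hS : Commute (S : Matrix n n ℝ) (diagonal d) := by
    simp only [S, Commute, SemiconjBy, diagonal_mul_diagonal, mul_comm]
  have hconj : (S : Matrix n n ℝ) * single k l 1 * ((S⁻¹ : (Matrix n n ℝ)ˣ) : Matrix n n ℝ)
      = (2 : ℝ) • single k l (1 : ℝ) := by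
    ext a b
    by_cases hab : k = a ∧ l = b
    · obtain ⟨rfl, rfl⟩ := hab
      simp [S, s, mul_diagonal, hkl.symm]
    · simp [S, diagonal_mul, mul_diagonal, hab]
  have h : fderiv ℝ exp (diagonal d)
        ((S : Matrix n n ℝ) * single k l 1 * ((S⁻¹ : (Matrix n n ℝ)ˣ) : Matrix n n ℝ))
      = S * fderiv ℝ exp (diagonal d) (single k l 1) * ((S⁻¹ : (Matrix n n ℝ)ˣ) : Matrix n n ℝ) :=
    fderiv_exp_units_conj _ _ S hS
  rw [hconj, map_smul] at h
  have hsij : s i = s j := by simp only [s, hij]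
  replace h := congrFun₂ h i j
  simp [S, mul_diagonal, hsij] at h
  field_simp [hs j] at h
  linarith

theorem fderiv_exp_diagonal_single (k l : n) :
    fderiv ℝ exp (diagonal d) (single k l 1) = single k l (expDividedDifference (d k) (d l)) := by
  by_cases hkl : d k = d l
  · have hc : Commute (diagonal d) (single k l 1) := by
      ext a b
      by_cases hab : k = a ∧ l = b
      · obtain ⟨rfl, rfl⟩ := hab
        simp [mul_diagonal, hkl]
      · simp [diagonal_mul, mul_diagonal, hab]
    have h : fderiv ℝ exp (diagonal d) (single k l 1) = exp (diagonal d) * single k l 1 :=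
      fderiv_exp_of_commute hc
    ext a b
    by_cases hab : k = a ∧ l = b
    · obtain ⟨rfl, rfl⟩ := hab
      simp [h, exp_diagonal_real, expDividedDifference, hkl]
    · simp [h, exp_diagonal_real, diagonal_mul, hab]
  · ext i j
    by_cases hij : d i = d j
    · rw [fderiv_exp_diagonal_single_apply_eq_zero d hkl hij, single_apply_of_ne]
      rintro ⟨rfl, rfl⟩
      exact hkl hij
    · by_cases hab : k = i ∧ l = j
      · obtain ⟨rfl, rfl⟩ := hab
        simp [fderiv_exp_diagonal_apply_of_ne d _ hij]
      · simp [fderiv_exp_diagonal_apply_of_ne d _ hij, hab]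

theorem fderiv_exp_diagonal (Δ : Matrix n n ℝ) :
    fderiv ℝ exp (diagonal d) Δ = of (fun i j => expDividedDifference (d i) (d j)) ⊙ Δ := by
  have hΔ : Δ = ∑ k, ∑ l, Δ k l • single k l (1 : ℝ) := by
    simpa [smul_single] using matrix_eq_sum_single Δ
  ext i j
  rw [hΔ]
  simp only [map_sum, map_smul, fderiv_exp_diagonal_single, Matrix.sum_apply, Matrix.smul_apply,
    single_apply, hadamard_apply, of_apply]
  simp [ite_and, mul_comm]

end DiagonalMatrix

/-- the Fréchet derivative of the matrix exponential at a diagonal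
matrix `Λ = diagonal d` applied to a direction `Δ` equals `B ∘ Δ` (Hadamard product),
with `B i j = e^{d i}` if `d i = d j` and `(e^{d i} − e^{d j})/(d i − d j)` otherwise. -/
theorem frechet_derivative_exp_diagonal
    (N : ℕ) (d : Fin N → ℝ)
    (B : Matrix (Fin N) (Fin N) ℝ)
    (hB : ∀ i j, B i j =
      if d i = d j then Real.exp (d i)
      else (Real.exp (d i) - Real.exp (d j)) / (d i - d j)) :
    DifferentiableAt ℝ (NormedSpace.exp :
        Matrix (Fin N) (Fin N) ℝ → Matrix (Fin N) (Fin N) ℝ) (Matrix.diagonal d) ∧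
    ∀ Δ : Matrix (Fin N) (Fin N) ℝ,
      fderiv ℝ (NormedSpace.exp :
        Matrix (Fin N) (Fin N) ℝ → Matrix (Fin N) (Fin N) ℝ) (Matrix.diagonal d) Δ =
      B ⊙ Δ := by
  have hB_eq : B = of fun i j => expDividedDifference (d i) (d j) := by
    ext i j
    exact hB i j
  refine ⟨(exp_analytic _).differentiableAt, fun Δ => ?_⟩
  rw [hB_eq, fderiv_exp_diagonal]
end
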